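/- Under Assumptions A1 and A2, ker(R^⊤) equals the closure in U* of the set { T^⊤ τ : τ ∈ Λ*, (I + X^⊤) τ = 0 }. Moreover, the set { T^⊤ τ : τ ∈ Λ*, (I + X^⊤) τ = 0 } is closed if and only if range((I − X) T) is closed in Λ. -/

import Mathlib

/-!
Riesz identifies each dual space with the Hilbert space itself and turns transposes into
adjoints, so everything can be computed in `U` and `Λ`. Put `A = (I - X) T`. Since `X†` is an
involution, `ker (I + X†) = range (I - X†)`, hence `T†` maps `ker (I + X†)` onto `range A†`.
Then `ker R† = (range R)ᗮ = (ker A)ᗮ` is the closure of `range A†`, and by the closed range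
theorem `range A†` is closed exactly when `range A` is.
-/

/-- The transpose (dual map) `B^⊤ : Y* → X*` of a bounded linear operator `B : X → Y`. -/
noncomputable def trOp {X Y : Type*} [NormedAddCommGroup X] [NormedSpace ℂ X]
    [NormedAddCommGroup Y] [NormedSpace ℂ Y] (B : X →L[ℂ] Y) :
    (Y →L[ℂ] ℂ) →L[ℂ] (X →L[ℂ] ℂ) :=
  (ContinuousLinearMap.compL ℂ X Y ℂ).flip B

open ContinuousLinearMap InnerProductSpace

theorem setOf_add_apply_eq_zero_eq_range_sub {R M G : Type*} [Ring R] [Invertible (2 : R)]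
    [AddCommGroup M] [Module R M] [FunLike G M M] [LinearMapClass G R M M] (Y : G)
    (hY : ∀ m, Y (Y m) = m) :
    {m | m + Y m = 0} = Set.range fun m => m - Y m := by
  ext m
  constructor
  · intro (hm : m + Y m = 0)
    refine ⟨(⅟2 : R) • m, ?_⟩
    show ⅟2 • m - Y (⅟2 • m) = m
    rw [map_smul, eq_neg_of_add_eq_zero_right hm, smul_neg, sub_neg_eq_add, ← add_smul,
      invOf_two_add_invOf_two, one_smul]
  · rintro ⟨m, rfl⟩
    show m - Y m + Y (m - Y m) = 0
    rw [map_sub, hY]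
    abel

section Adjoint

variable {E F : Type*} [NormedAddCommGroup E] [InnerProductSpace ℂ E] [CompleteSpace E]
  [NormedAddCommGroup F] [InnerProductSpace ℂ F] [CompleteSpace F]

theorem closure_range_adjoint (A : E →L[ℂ] F) :
    closure (Set.range (adjoint A)) = (A.kerᗮ : Set E) := by
  rw [orthogonal_ker, Submodule.topologicalClosure_coe]
  rfl

/-- `‖y‖² = ⟪A† y, x⟫` for a preimage `x` of `y` with `‖x‖ ≤ C ‖y‖` (open mapping theorem). -/
theorem exists_norm_le_mul_norm_adjoint_of_surjective {A : E →L[ℂ] F}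
    (hA : Function.Surjective A) : ∃ C : NNReal, ∀ y, ‖y‖ ≤ C * ‖adjoint A y‖ := by
  obtain ⟨C, hC, hpre⟩ := A.exists_preimage_norm_le hA
  refine ⟨⟨C, hC.le⟩, fun y => ?_⟩
  obtain ⟨x, rfl, hx⟩ := hpre y
  rcases (norm_nonneg (A x)).eq_or_lt with h0 | hpos
  · rw [← h0]; positivity
  refine le_of_mul_le_mul_right ?_ hpos
  calc ‖A x‖ * ‖A x‖ = ‖inner ℂ (adjoint A (A x)) x‖ := by
        rw [adjoint_inner_left, inner_self_eq_norm_sq_to_K]; simp [sq]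
    _ ≤ ‖adjoint A (A x)‖ * ‖x‖ := norm_inner_le_norm _ _
    _ ≤ ‖adjoint A (A x)‖ * (C * ‖A x‖) := by gcongr
    _ = C * ‖adjoint A (A x)‖ * ‖A x‖ := by ring

theorem isClosed_range_adjoint_of_surjective {A : E →L[ℂ] F} (hA : Function.Surjective A) :
    IsClosed (Set.range (adjoint A)) := by
  obtain ⟨C, hC⟩ := exists_norm_le_mul_norm_adjoint_of_surjective hA
  exact ((adjoint A).antilipschitz_of_bound hC).isClosed_range (adjoint A).uniformContinuous

theorem adjoint_rangeRestrict_apply (A : E →L[ℂ] F) [CompleteSpace A.range] (y : A.range) :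
    adjoint A.rangeRestrict y = adjoint A y :=
  ext_inner_right ℂ fun x => by rw [adjoint_inner_left, adjoint_inner_left]; rfl

/-- Closed range theorem: pass to the surjection `A : E → range A`, whose adjoint is bounded
below. -/
theorem range_adjoint_eq_orthogonal_ker (A : E →L[ℂ] F) (hA : IsClosed (Set.range A)) :
    Set.range (adjoint A) = (A.kerᗮ : Set E) := by
  have : CompleteSpace A.range := hA.completeSpace_coe
  have hsurj : Function.Surjective A.rangeRestrict := by
    rintro ⟨_, x, rfl⟩
    exact ⟨x, rfl⟩
  refine (closure_range_adjoint A ▸ subset_closure).antisymm ?_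
  calc (A.kerᗮ : Set E) = A.rangeRestrict.kerᗮ := by rw [ker_codRestrict]
    _ = closure (Set.range (adjoint A.rangeRestrict)) := (closure_range_adjoint _).symm
    _ = Set.range (adjoint A.rangeRestrict) :=
      (isClosed_range_adjoint_of_surjective hsurj).closure_eq
    _ ⊆ Set.range (adjoint A) := by
      rintro _ ⟨y, rfl⟩
      exact ⟨y, (adjoint_rangeRestrict_apply A y).symm⟩

theorem isClosed_range_adjoint_of_isClosed_range (A : E →L[ℂ] F)
    (hA : IsClosed (Set.range A)) :
    IsClosed (Set.range (adjoint A)) := by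
  rw [range_adjoint_eq_orthogonal_ker A hA]
  exact Submodule.isClosed_orthogonal _

theorem isClosed_range_adjoint_iff (A : E →L[ℂ] F) :
    IsClosed (Set.range (adjoint A)) ↔ IsClosed (Set.range A) := by
  refine ⟨fun h => ?_, isClosed_range_adjoint_of_isClosed_range A⟩
  simpa using isClosed_range_adjoint_of_isClosed_range (adjoint A) h

theorem trOp_toDual (B : E →L[ℂ] F) (y : F) :
    trOp B (toDual ℂ F y) = toDual ℂ E (adjoint B y) := by
  ext x
  exact (adjoint_inner_left B x y).symm

theorem image_trOp_image_toDual (B : E →L[ℂ] F) (s : Set F) :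
    trOp B '' (toDual ℂ F '' s) = toDual ℂ E '' (adjoint B '' s) := by
  simp only [Set.image_image, trOp_toDual]

theorem ker_trOp (B : E →L[ℂ] F) :
    (LinearMap.ker (trOp B : StrongDual ℂ F →ₗ[ℂ] StrongDual ℂ E) : Set (StrongDual ℂ F)) =
      toDual ℂ F '' (LinearMap.ker (adjoint B : F →ₗ[ℂ] E)) := by
  rw [LinearIsometryEquiv.image_eq_preimage_symm]
  ext f
  obtain ⟨y, rfl⟩ := (toDual ℂ F).surjective f
  simp [trOp_toDual]

theorem setOf_add_trOp_eq_zero_eq_image_toDual (X : F →L[ℂ] F) :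
    {τ : StrongDual ℂ F | τ + trOp X τ = 0} = toDual ℂ F '' {y | y + adjoint X y = 0} := by
  rw [LinearIsometryEquiv.image_eq_preimage_symm]
  ext f
  obtain ⟨y, rfl⟩ := (toDual ℂ F).surjective f
  simp [trOp_toDual, ← map_add]

end Adjoint

theorem statement2
    {Uhat U Lam : Type*}
    [NormedAddCommGroup Uhat] [InnerProductSpace ℂ Uhat] [CompleteSpace Uhat]
    [NormedAddCommGroup U] [InnerProductSpace ℂ U] [CompleteSpace U]
    [NormedAddCommGroup Lam] [InnerProductSpace ℂ Lam] [CompleteSpace Lam]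
    (R : Uhat →L[ℂ] U) (T : U →L[ℂ] Lam) (X : Lam →L[ℂ] Lam)
    -- Assumption A2
    (hX2 : X.comp X = ContinuousLinearMap.id ℂ Lam)
    (hA2 : LinearMap.range (R : Uhat →ₗ[ℂ] U) = LinearMap.ker ((ContinuousLinearMap.id ℂ Lam - X).comp T : U →ₗ[ℂ] Lam)) :
    (LinearMap.ker (trOp R : (U →L[ℂ] ℂ) →ₗ[ℂ] (Uhat →L[ℂ] ℂ)) : Set (U →L[ℂ] ℂ)) =
        closure (⇑(trOp T) '' {τ : Lam →L[ℂ] ℂ | τ + trOp X τ = 0}) ∧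
    (IsClosed (⇑(trOp T) '' {τ : Lam →L[ℂ] ℂ | τ + trOp X τ = 0}) ↔
      IsClosed (Set.range fun u : U => T u - X (T u))) := by
  set A := (ContinuousLinearMap.id ℂ Lam - X).comp T
  have hXX : ∀ l, adjoint X (adjoint X l) = l := fun l => by
    simpa [adjoint_comp, adjoint_id] using congr($(congrArg adjoint hX2) l)
  have himage : trOp T '' {τ | τ + trOp X τ = 0} = toDual ℂ U '' Set.range (adjoint A) := by
    rw [setOf_add_trOp_eq_zero_eq_image_toDual, image_trOp_image_toDual,
      setOf_add_apply_eq_zero_eq_range_sub (R := ℂ) (adjoint X) hXX, ← Set.range_comp]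
    congr 2
    funext l
    simp [A, adjoint_comp, map_sub]
  have hker : (LinearMap.ker (adjoint R : U →ₗ[ℂ] Uhat) : Set U) =
      closure (Set.range (adjoint A)) := by
    rw [closure_range_adjoint, ← orthogonal_range, hA2]
  refine ⟨?_, ?_⟩
  · rw [ker_trOp, himage, hker]
    exact (toDual ℂ U).toHomeomorph.image_closure _
  · rw [himage]
    exact ((toDual ℂ U).toHomeomorph.isClosed_image).trans (isClosed_range_adjoint_iff A)
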